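/- Let H ∈ ℂ^{2n×2n} with H = -H^T. Then the similarity transformation of the operator vector 𝔠 by the exponential of the quadratic form satisfies e^{(i/2) 𝔠^T H 𝔠} 𝔠 e^{-(i/2) 𝔠^T H 𝔠} = O 𝔠, where O = e^{-i E H} (the identity holding componentwise: e^{(i/2) 𝔠^T H 𝔠} 𝔠_j e^{-(i/2) 𝔠^T H 𝔠} = Σ_k O_{jk} 𝔠_k). -/

import Mathlib

/-!
With `A = (i/2) 𝔠ᵀH𝔠`, the CARs together with `H = -Hᵀ` and `E = Eᵀ` give
`A 𝔠ᵢ - 𝔠ᵢ A = ∑ₖ (-iEH)ᵢₖ 𝔠ₖ`. Hence the operator `ad A = L_A - R_A` maps the span of the `𝔠ₖ`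
into itself and acts there through the matrix `M = -iEH`, so `exp (ad A)` acts through `exp M`.
Since `L_A` and `R_A` commute, `exp (ad A) = L_{exp A} R_{exp (-A)}` is conjugation by `exp A`.
-/

open Matrix BigOperators
open scoped ComplexOrder

noncomputable def Emat (n : ℕ) : Matrix (Fin n ⊕ Fin n) (Fin n ⊕ Fin n) ℂ :=
  Matrix.fromBlocks 0 1 1 0

noncomputable def quadForm (n : ℕ) (c : Fin n ⊕ Fin n → Matrix (Fin (2^n)) (Fin (2^n)) ℂ)
    (H : Matrix (Fin n ⊕ Fin n) (Fin n ⊕ Fin n) ℂ) : Matrix (Fin (2^n)) (Fin (2^n)) ℂ :=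
  ∑ j, ∑ k, H j k • (c j * c k)

section Commutator

variable {𝕜 R ι : Type*} [CommRing 𝕜] [Ring R] [Algebra 𝕜 R]

theorem mul_mul_sub_mul_of_anticomm (c : ι → R) (E : Matrix ι ι 𝕜)
    (hCAR : ∀ a b, c a * c b + c b * c a = E a b • (1 : R)) (a b i : ι) :
    c a * c b * c i - c i * (c a * c b) = E b i • c a - E a i • c b := by
  have : c a * c b * c i - c i * (c a * c b)
      = c a * (c b * c i + c i * c b) - (c a * c i + c i * c a) * c b := by
    noncomm_ring
  rw [this, hCAR, hCAR, mul_smul_one, smul_one_mul]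

theorem quadratic_mul_sub_mul_of_anticomm [Fintype ι] (c : ι → R) (E H : Matrix ι ι 𝕜)
    (hCAR : ∀ a b, c a * c b + c b * c a = E a b • (1 : R)) (hE : Eᵀ = E) (hH : H = -Hᵀ)
    (i : ι) :
    (∑ a, ∑ b, H a b • (c a * c b)) * c i - c i * ∑ a, ∑ b, H a b • (c a * c b)
      = ∑ k, (-2 * (E * H) i k) • c k := by
  have hHE (k : ι) : ∑ b, H k b * E b i = -(E * H) i k := by
    rw [mul_apply, ← Finset.sum_neg_distrib]
    refine Finset.sum_congr rfl fun b _ => ?_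
    have hHkb : H k b = -H b k := by simpa using congrFun₂ hH k b
    rw [hHkb, ← congrFun₂ hE b i, transpose_apply]
    ring
  have hHtE (k : ι) : ∑ a, H a k * E a i = (E * H) i k := by
    rw [mul_apply]
    refine Finset.sum_congr rfl fun a _ => ?_
    rw [← congrFun₂ hE a i, transpose_apply]
    ring
  calc (∑ a, ∑ b, H a b • (c a * c b)) * c i - c i * ∑ a, ∑ b, H a b • (c a * c b)
      = ∑ a, ∑ b, H a b • (E b i • c a - E a i • c b) := by
        simp only [Finset.sum_mul, Finset.mul_sum, ← Finset.sum_sub_distrib, smul_mul_assoc,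
          mul_smul_comm, ← smul_sub, mul_mul_sub_mul_of_anticomm c E hCAR]
    _ = ∑ k, (∑ b, H k b * E b i) • c k - ∑ k, (∑ a, H a k * E a i) • c k := by
        simp only [smul_sub, smul_smul, Finset.sum_sub_distrib, Finset.sum_smul]
        rw [Finset.sum_comm (f := fun a b => (H a b * E a i) • c b)]
    _ = ∑ k, (-2 * (E * H) i k) • c k := by
        rw [← Finset.sum_sub_distrib]
        refine Finset.sum_congr rfl fun k _ => ?_
        rw [← sub_smul, hHE, hHtE]
        congr 1
        ring

end Commutator

section MatrixExponential

variable {𝕂 : Type*} [RCLike 𝕂]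

-- `exp` only depends on the topology, so any submultiplicative norm inducing it may be used here.
attribute [local instance] Matrix.linftyOpNormedRing Matrix.linftyOpNormedAlgebra

theorem Matrix.hasSum_expSeries_apply {ι : Type*} [Fintype ι] [DecidableEq ι]
    (M : Matrix ι ι 𝕂) (i j : ι) :
    HasSum (fun m : ℕ => (m.factorial⁻¹ : 𝕂) • (M ^ m) i j) (NormedSpace.exp M i j) := by
  let e : Matrix ι ι 𝕂 →L[𝕂] 𝕂 :=
    ⟨Matrix.entryLinearMap 𝕂 𝕂 i j, (continuous_apply j).comp (continuous_apply i)⟩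
  exact (NormedSpace.exp_series_hasSum_exp' (𝕂 := 𝕂) M).mapL e

end MatrixExponential

section Exponential

open NormedSpace

variable {𝕂 𝔸 : Type*} [RCLike 𝕂] [NormedRing 𝔸] [NormedAlgebra 𝕂 𝔸]

variable (𝕂) in
theorem mem_eball_expSeries_radius (x : 𝔸) :
    x ∈ Metric.eball (0 : 𝔸) (expSeries 𝕂 𝔸).radius :=
  (expSeries_radius_eq_top 𝕂 𝔸).symm ▸ edist_lt_top _ _

variable [CompleteSpace 𝔸]

theorem exp_continuousLinearMap_mul (x : 𝔸) :
    exp (ContinuousLinearMap.mul 𝕂 𝔸 x) = ContinuousLinearMap.mul 𝕂 𝔸 (exp x) := by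
  let f : 𝔸 →ₐ[𝕂] 𝔸 →L[𝕂] 𝔸 :=
    AlgHom.ofLinearMap (ContinuousLinearMap.mul 𝕂 𝔸).toLinearMap (by ext; simp)
      (fun a b => by ext; simp [mul_assoc])
  exact (map_exp_of_mem_ball f (ContinuousLinearMap.mul 𝕂 𝔸).continuous x
    (mem_eball_expSeries_radius 𝕂 x)).symm

theorem exp_continuousLinearMap_mul_flip (x : 𝔸) :
    exp ((ContinuousLinearMap.mul 𝕂 𝔸).flip x) = (ContinuousLinearMap.mul 𝕂 𝔸).flip (exp x) := by
  let f : 𝔸ᵐᵒᵖ →ₐ[𝕂] 𝔸 →L[𝕂] 𝔸 :=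
    AlgHom.ofLinearMap ((ContinuousLinearMap.mul 𝕂 𝔸).flip.toLinearMap ∘ₗ
        (MulOpposite.opLinearEquiv 𝕂).symm.toLinearMap) (by ext; simp)
      (fun a b => by ext; simp [mul_assoc])
  have := map_exp_of_mem_ball f
    ((ContinuousLinearMap.mul 𝕂 𝔸).flip.continuous.comp MulOpposite.continuous_unop)
    (MulOpposite.op x) (mem_eball_expSeries_radius 𝕂 _)
  rw [exp_op] at this
  exact this.symm

theorem exp_mul_sub_mul_flip_apply (A x : 𝔸) :
    exp (ContinuousLinearMap.mul 𝕂 𝔸 A - (ContinuousLinearMap.mul 𝕂 𝔸).flip A) x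
      = exp A * x * exp (-A) := by
  have hcomm : Commute (ContinuousLinearMap.mul 𝕂 𝔸 A) (-(ContinuousLinearMap.mul 𝕂 𝔸).flip A) :=
    ContinuousLinearMap.ext fun y => by simp [mul_assoc]
  rw [sub_eq_add_neg, exp_add_of_commute_of_mem_ball hcomm (mem_eball_expSeries_radius 𝕂 _)
    (mem_eball_expSeries_radius 𝕂 _), ← map_neg, exp_continuousLinearMap_mul,
    exp_continuousLinearMap_mul_flip]
  simp [mul_assoc]

theorem exp_apply_eq_sum_of_apply_eq_sum {ι F : Type*} [Fintype ι] [DecidableEq ι]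
    [NormedAddCommGroup F] [NormedSpace 𝕂 F] [CompleteSpace F]
    (T : F →L[𝕂] F) (c : ι → F) (M : Matrix ι ι 𝕂) (hT : ∀ i, T (c i) = ∑ k, M i k • c k)
    (j : ι) :
    exp T (c j) = ∑ k, exp M j k • c k := by
  have hpow (m : ℕ) : ∀ i, (T ^ m) (c i) = ∑ k, (M ^ m) i k • c k := by
    induction m with
    | zero => simp [one_apply, ite_smul]
    | succ m ih =>
      intro i
      calc (T ^ (m + 1)) (c i) = ∑ k, M i k • ∑ l, (M ^ m) k l • c l := by
            simp only [pow_succ, mul_apply_eq_comp, hT, map_sum, map_smul, ih]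
        _ = ∑ l, (M ^ (m + 1)) i l • c l := by
            simp only [pow_succ', mul_apply, Finset.smul_sum, Finset.sum_smul, smul_smul]
            exact Finset.sum_comm
  have hT := (exp_series_hasSum_exp' (𝕂 := 𝕂) T).mapL (ContinuousLinearMap.apply 𝕂 F (c j))
  have hM := hasSum_sum fun k (_ : k ∈ Finset.univ) =>
    (M.hasSum_expSeries_apply j k).smul_const (c k)
  refine hT.unique ?_
  simpa [hpow, Finset.smul_sum, smul_smul] using hM

end Exponential

theorem Emat_transpose (n : ℕ) : (Emat n)ᵀ = Emat n := by
  simp [Emat, fromBlocks_transpose]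

/-- `e^{(i/2)𝔠ᵀH𝔠} 𝔠ⱼ e^{-(i/2)𝔠ᵀH𝔠} = ∑ₖ Oⱼₖ 𝔠ₖ` with `O = e^{-iEH}`. -/
theorem statement2 (n : ℕ) (c : Fin n ⊕ Fin n → Matrix (Fin (2^n)) (Fin (2^n)) ℂ)
    (hCAR : ∀ j k, c j * c k + c k * c j = Emat n j k • (1 : Matrix (Fin (2^n)) (Fin (2^n)) ℂ))
    (H : Matrix (Fin n ⊕ Fin n) (Fin n ⊕ Fin n) ℂ)
    (hanti : H = -Hᵀ) (j : Fin n ⊕ Fin n) :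
    NormedSpace.exp ((Complex.I / 2) • quadForm n c H) * c j *
        NormedSpace.exp (-((Complex.I / 2) • quadForm n c H))
      = ∑ k, (NormedSpace.exp (-(Complex.I • (Emat n * H)))) j k • c k := by
  let _ : NormedRing (Matrix (Fin (2^n)) (Fin (2^n)) ℂ) := Matrix.linftyOpNormedRing
  let _ : NormedAlgebra ℂ (Matrix (Fin (2^n)) (Fin (2^n)) ℂ) := Matrix.linftyOpNormedAlgebra
  set A := (Complex.I / 2) • quadForm n c H
  have hA (i : Fin n ⊕ Fin n) :
      (ContinuousLinearMap.mul ℂ _ A - (ContinuousLinearMap.mul ℂ _).flip A) (c i)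
        = ∑ k, (-(Complex.I • (Emat n * H))) i k • c k := by
    rw [_root_.sub_apply, ContinuousLinearMap.flip_apply,
      ContinuousLinearMap.mul_apply', ContinuousLinearMap.mul_apply', smul_mul_assoc,
      mul_smul_comm, ← smul_sub, quadForm, quadratic_mul_sub_mul_of_anticomm c _ H hCAR (Emat_transpose n) hanti i,
      Finset.smul_sum]
    refine Finset.sum_congr rfl fun k _ => ?_
    rw [smul_smul]
    congr 1
    rw [Matrix.neg_apply, Matrix.smul_apply, smul_eq_mul]
    ring
  exact (exp_mul_sub_mul_flip_apply A (c j)).symm.trans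
    (exp_apply_eq_sum_of_apply_eq_sum _ c _ hA j)
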